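/- Suppose (S, A) with S real-valued and A complex-valued are smooth solutions of the regularized system ∂_t S + |∇S|²/2 + |A|² = ε²ΔS and ∂_t A + ∇S·∇A + (A/2)ΔS = (iε/2)ΔA − iεAΔS. Then Ψ = A·exp(iS/ε) solves iε∂_t Ψ = −(ε²/2)ΔΨ + |Ψ|²Ψ. -/

import Mathlib

open scoped BigOperators
open Complex

noncomputable def pd {d : ℕ} {F : Type*} [NormedAddCommGroup F] [NormedSpace ℝ F]
    (f : EuclideanSpace ℝ (Fin d) → F) (i : Fin d) (x : EuclideanSpace ℝ (Fin d)) : F :=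
  fderiv ℝ f x (EuclideanSpace.single i 1)

noncomputable def lap {d : ℕ} {F : Type*} [NormedAddCommGroup F] [NormedSpace ℝ F]
    (f : EuclideanSpace ℝ (Fin d) → F) (x : EuclideanSpace ℝ (Fin d)) : F :=
  ∑ i, pd (fun y => pd f i y) i x

section Aux

variable {d : ℕ}

local notation "E" => EuclideanSpace ℝ (Fin d)

lemma contDiff_pd {F : Type*} [NormedAddCommGroup F] [NormedSpace ℝ F]
    {f : E → F} (hf : ContDiff ℝ (⊤ : ℕ∞) f) (i : Fin d) :
    ContDiff ℝ (⊤ : ℕ∞) (fun y => pd f i y) :=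
  (hf.fderiv_right (by simp)).clm_apply contDiff_const

lemma pd_add {f g : E → ℂ} {i : Fin d} {x : E}
    (hf : DifferentiableAt ℝ f x) (hg : DifferentiableAt ℝ g x) :
    pd (fun y => f y + g y) i x = pd f i x + pd g i x := by
  simp [pd, fderiv_fun_add hf hg]

lemma pd_mul {f g : E → ℂ} {i : Fin d} {x : E}
    (hf : DifferentiableAt ℝ f x) (hg : DifferentiableAt ℝ g x) :
    pd (fun y => f y * g y) i x = pd f i x * g x + f x * pd g i x := by
  simp only [pd, fderiv_fun_mul hf hg, ContinuousLinearMap.add_apply,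
    ContinuousLinearMap.smul_apply, smul_eq_mul]
  ring

lemma pd_const_mul {c : ℂ} {f : E → ℂ} {i : Fin d} {x : E}
    (hf : DifferentiableAt ℝ f x) :
    pd (fun y => c * f y) i x = c * pd f i x := by
  simp [pd, fderiv_const_mul hf c]

lemma pd_ofReal {f : E → ℝ} {i : Fin d} {x : E}
    (hf : DifferentiableAt ℝ f x) :
    pd (fun y => ((f y : ℝ) : ℂ)) i x = ((pd f i x : ℝ) : ℂ) := by
  have h := (Complex.ofRealCLM.hasFDerivAt.comp x hf.hasFDerivAt).fderiv
  simp only [pd]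
  rw [show (fun y => ((f y : ℝ) : ℂ)) = Complex.ofRealCLM ∘ f from rfl, h]
  simp

lemma pd_cexp {f : E → ℂ} {i : Fin d} {x : E}
    (hf : DifferentiableAt ℝ f x) :
    pd (fun y => Complex.exp (f y)) i x = Complex.exp (f x) * pd f i x := by
  have h := (hf.hasFDerivAt.cexp).fderiv
  simp [pd, h]

/-- derivative of the phase -/
lemma pd_phase {s : E → ℝ} {ε : ℝ} {i : Fin d} {x : E}
    (hs : DifferentiableAt ℝ s x) :
    pd (fun y => Complex.exp (Complex.I * (s y : ℂ) / (ε : ℂ))) i x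
      = (Complex.I / (ε : ℂ)) * ((pd s i x : ℝ) : ℂ)
          * Complex.exp (Complex.I * (s x : ℂ) / (ε : ℂ)) := by
  have hco : DifferentiableAt ℝ (fun y => ((s y : ℝ) : ℂ)) x :=
    Complex.ofRealCLM.differentiableAt.comp x hs
  have heq : (fun y => Complex.I * ((s y : ℝ) : ℂ) / (ε : ℂ))
      = fun y => (Complex.I / (ε : ℂ)) * ((s y : ℝ) : ℂ) := by
    funext y; ring
  have hfun : (fun y => Complex.exp (Complex.I * ((s y : ℝ) : ℂ) / (ε : ℂ)))
      = fun y => Complex.exp ((Complex.I / (ε : ℂ)) * ((s y : ℝ) : ℂ)) := by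
    funext y; congr 1; ring
  rw [hfun, pd_cexp (hco.const_mul _), pd_const_mul hco, pd_ofReal hs]
  rw [show Complex.I / (ε : ℂ) * ((s x : ℝ) : ℂ) = Complex.I * ((s x : ℝ) : ℂ) / (ε : ℂ) by ring]
  ring

/-- derivative of amplitude times phase -/
lemma pd_mul_phase {a : E → ℂ} {s : E → ℝ} {ε : ℝ} {i : Fin d} {x : E}
    (ha : DifferentiableAt ℝ a x) (hs : DifferentiableAt ℝ s x) :
    pd (fun y => a y * Complex.exp (Complex.I * (s y : ℂ) / (ε : ℂ))) i x
      = (pd a i x + (Complex.I / (ε : ℂ)) * a x * ((pd s i x : ℝ) : ℂ))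
          * Complex.exp (Complex.I * (s x : ℂ) / (ε : ℂ)) := by
  have hco : DifferentiableAt ℝ (fun y => ((s y : ℝ) : ℂ)) x :=
    Complex.ofRealCLM.differentiableAt.comp x hs
  have hdiv : DifferentiableAt ℝ (fun y => Complex.I * ((s y : ℝ) : ℂ) / (ε : ℂ)) x := by
    have h1 : DifferentiableAt ℝ (fun y => (Complex.I / (ε : ℂ)) * ((s y : ℝ) : ℂ)) x :=
      hco.const_mul _
    have : (fun y => Complex.I * ((s y : ℝ) : ℂ) / (ε : ℂ))
        = fun y => (Complex.I / (ε : ℂ)) * ((s y : ℝ) : ℂ) := by funext y; ring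
    rw [this]; exact h1
  have hexp : DifferentiableAt ℝ
      (fun y => Complex.exp (Complex.I * ((s y : ℝ) : ℂ) / (ε : ℂ))) x := hdiv.cexp
  rw [pd_mul ha hexp, pd_phase hs]
  ring

end Aux

/-- Regularized (Besse–Carles–Méhats) WKB system: if `(S,A)` smoothly solve
`∂ₜS + |∇S|²/2 + |A|² = ε²ΔS` and
`∂ₜA + ∇S·∇A + (A/2)ΔS = (iε/2)ΔA − iεAΔS`,
then `Ψ = A·exp(iS/ε)` solves `iε∂ₜΨ = −(ε²/2)ΔΨ + |Ψ|²Ψ`. -/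
theorem regularized_system_gives_semiclassical_NLS
    (d : ℕ) (hd : 1 ≤ d) (ε T : ℝ) (hε : 0 < ε) (hT : 0 < T)
    (S : ℝ → EuclideanSpace ℝ (Fin d) → ℝ)
    (A : ℝ → EuclideanSpace ℝ (Fin d) → ℂ)
    (hS : ContDiff ℝ (⊤ : ℕ∞) (Function.uncurry S))
    (hA : ContDiff ℝ (⊤ : ℕ∞) (Function.uncurry A))
    (hPDE1 : ∀ t ∈ Set.Icc (0:ℝ) T, ∀ x,
      deriv (fun s => S s x) t + (∑ i, (pd (S t) i x)^2) / 2 + ‖A t x‖^2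
        = ε^2 * lap (S t) x)
    (hPDE2 : ∀ t ∈ Set.Icc (0:ℝ) T, ∀ x,
      deriv (fun s => A s x) t + (∑ i, ((pd (S t) i x : ℝ) : ℂ) * pd (A t) i x)
        + (A t x / 2) * ((lap (S t) x : ℝ) : ℂ)
        = (Complex.I * (ε : ℂ) / 2) * lap (A t) x
          - Complex.I * (ε : ℂ) * A t x * ((lap (S t) x : ℝ) : ℂ))
    (Ψ : ℝ → EuclideanSpace ℝ (Fin d) → ℂ)
    (hΨ : ∀ t x, Ψ t x = A t x * Complex.exp (Complex.I * (S t x : ℂ) / (ε : ℂ))) :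
    ∀ t ∈ Set.Icc (0:ℝ) T, ∀ x,
      Complex.I * (ε : ℂ) * deriv (fun s => Ψ s x) t
        = -((ε : ℂ)^2 / 2) * lap (Ψ t) x + (‖Ψ t x‖^2 : ℝ) * Ψ t x := by
  intro t ht x
  have hεC : (ε : ℂ) ≠ 0 := Complex.ofReal_ne_zero.mpr hε.ne'
  -- slices are smooth
  have hSt : ContDiff ℝ (⊤ : ℕ∞) (S t) := hS.comp (contDiff_const.prodMk contDiff_id)
  have hAt : ContDiff ℝ (⊤ : ℕ∞) (A t) := hA.comp (contDiff_const.prodMk contDiff_id)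
  have hSx : ContDiff ℝ (⊤ : ℕ∞) (fun τ => S τ x) := hS.comp (contDiff_id.prodMk contDiff_const)
  have hAx : ContDiff ℝ (⊤ : ℕ∞) (fun τ => A τ x) := hA.comp (contDiff_id.prodMk contDiff_const)
  -- abbreviations
  set e : ℂ := Complex.exp (Complex.I * (S t x : ℂ) / (ε : ℂ)) with he
  have hΨt : Ψ t = fun y => A t y * Complex.exp (Complex.I * (S t y : ℂ) / (ε : ℂ)) :=
    funext fun y => hΨ t y
  -- time derivative of Ψ
  have hSd : HasDerivAt (fun τ => S τ x) (deriv (fun τ => S τ x) t) t :=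
    (hSx.differentiable (by simp) t).hasDerivAt
  have hAd : HasDerivAt (fun τ => A τ x) (deriv (fun τ => A τ x) t) t :=
    (hAx.differentiable (by simp) t).hasDerivAt
  set St' : ℝ := deriv (fun τ => S τ x) t
  set At' : ℂ := deriv (fun τ => A τ x) t
  have hphase : HasDerivAt (fun τ => Complex.exp (Complex.I * (S τ x : ℂ) / (ε : ℂ)))
      ((Complex.I * (St' : ℂ) / (ε : ℂ)) * e) t := by
    have h1 : HasDerivAt (fun τ => ((S τ x : ℝ) : ℂ)) ((St' : ℝ) : ℂ) t := hSd.ofReal_comp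
    have h2 : HasDerivAt (fun τ => Complex.I * ((S τ x : ℝ) : ℂ) / (ε : ℂ))
        (Complex.I * ((St' : ℝ) : ℂ) / (ε : ℂ)) t := (h1.const_mul Complex.I).div_const _
    simpa [he, mul_comm] using h2.cexp
  have hΨd : HasDerivAt (fun τ => Ψ τ x)
      (At' * e + A t x * ((Complex.I * (St' : ℂ) / (ε : ℂ)) * e)) t := by
    have hfun : (fun τ => Ψ τ x)
        = fun τ => A τ x * Complex.exp (Complex.I * (S τ x : ℂ) / (ε : ℂ)) :=
      funext fun τ => hΨ τ x
    rw [hfun]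
    simpa [he] using hAd.fun_mul hphase
  have hderivΨ : deriv (fun τ => Ψ τ x) t
      = (At' + Complex.I / (ε : ℂ) * A t x * (St' : ℂ)) * e := by
    rw [hΨd.deriv]; ring
  -- spatial derivatives
  have hAtd : ∀ y, DifferentiableAt ℝ (A t) y := fun y => hAt.differentiable (by simp) y
  have hStd : ∀ y, DifferentiableAt ℝ (S t) y := fun y => hSt.differentiable (by simp) y
  have hpdA : ∀ i, ∀ y, DifferentiableAt ℝ (fun z => pd (A t) i z) y :=
    fun i y => (contDiff_pd hAt i).differentiable (by simp) y
  have hpdS : ∀ i, ∀ y, DifferentiableAt ℝ (fun z => pd (S t) i z) y :=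
    fun i y => (contDiff_pd hSt i).differentiable (by simp) y
  -- first spatial derivative of Ψ t
  have hgrad : ∀ i y, pd (Ψ t) i y
      = (pd (A t) i y + (Complex.I / (ε : ℂ)) * A t y * ((pd (S t) i y : ℝ) : ℂ))
          * Complex.exp (Complex.I * (S t y : ℂ) / (ε : ℂ)) := by
    intro i y
    rw [hΨt]
    exact pd_mul_phase (hAtd y) (hStd y)
  -- the Laplacian of Ψ t
  have hlap : lap (Ψ t) x
      = ((lap (A t) x : ℂ)
          + (2 * Complex.I / (ε : ℂ)) * (∑ i, ((pd (S t) i x : ℝ) : ℂ) * pd (A t) i x)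
          + (Complex.I / (ε : ℂ)) * A t x * ((lap (S t) x : ℝ) : ℂ)
          - (1 / (ε : ℂ)^2) * A t x * ((∑ i, (pd (S t) i x)^2 : ℝ) : ℂ)) * e := by
    have hterm : ∀ i, pd (fun y => pd (Ψ t) i y) i x
        = (pd (fun y => pd (A t) i y) i x
            + (Complex.I / (ε : ℂ)) * (pd (A t) i x * ((pd (S t) i x : ℝ) : ℂ)
                + A t x * ((pd (fun y => pd (S t) i y) i x : ℝ) : ℂ))
            + (Complex.I / (ε : ℂ))
              * (pd (A t) i x + (Complex.I / (ε : ℂ)) * A t x * ((pd (S t) i x : ℝ) : ℂ))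
              * ((pd (S t) i x : ℝ) : ℂ)) * e := by
      intro i
      have hg : ∀ y, pd (Ψ t) i y
          = (fun z => pd (A t) i z + (Complex.I / (ε : ℂ)) * A t z * ((pd (S t) i z : ℝ) : ℂ)) y
            * Complex.exp (Complex.I * (S t y : ℂ) / (ε : ℂ)) := fun y => hgrad i y
    -- differentiability of the amplitude factor
      have hamp : ∀ y, DifferentiableAt ℝ
          (fun z => pd (A t) i z + (Complex.I / (ε : ℂ)) * A t z * ((pd (S t) i z : ℝ) : ℂ)) y := by
        intro y
        have hcoy : DifferentiableAt ℝ (fun z => ((pd (S t) i z : ℝ) : ℂ)) y :=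
          Complex.ofRealCLM.differentiableAt.comp y (hpdS i y)
        exact (hpdA i y).add (((hAtd y).const_mul (Complex.I / (ε : ℂ))).mul hcoy)
      have : pd (fun y => pd (Ψ t) i y) i x
          = pd (fun y =>
              (fun z => pd (A t) i z + (Complex.I / (ε : ℂ)) * A t z * ((pd (S t) i z : ℝ) : ℂ)) y
              * Complex.exp (Complex.I * (S t y : ℂ) / (ε : ℂ))) i x := by
        congr 1; funext y; exact hg y
      rw [this, pd_mul_phase (hamp x) (hStd x)]
      -- compute pd of the amplitude factor
      have h1 : pd (fun z => pd (A t) i z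
          + (Complex.I / (ε : ℂ)) * (A t z * ((pd (S t) i z : ℝ) : ℂ))) i x
          = pd (fun y => pd (A t) i y) i x
            + (Complex.I / (ε : ℂ)) * (pd (A t) i x * ((pd (S t) i x : ℝ) : ℂ)
                + A t x * ((pd (fun y => pd (S t) i y) i x : ℝ) : ℂ)) := by
        have hcox : DifferentiableAt ℝ (fun z => ((pd (S t) i z : ℝ) : ℂ)) x :=
          Complex.ofRealCLM.differentiableAt.comp x (hpdS i x)
        have hm : DifferentiableAt ℝ (fun z => A t z * ((pd (S t) i z : ℝ) : ℂ)) x :=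
          (hAtd x).mul hcox
        rw [pd_add (hpdA i x) (hm.const_mul _), pd_const_mul hm,
          pd_mul (hAtd x) hcox, pd_ofReal (hpdS i x)]
      have heq : (fun z => pd (A t) i z + (Complex.I / (ε : ℂ)) * A t z * ((pd (S t) i z : ℝ) : ℂ))
          = (fun z => pd (A t) i z + (Complex.I / (ε : ℂ)) * (A t z * ((pd (S t) i z : ℝ) : ℂ))) := by
        funext z; ring
      rw [he]
      rw [heq, h1]
    rw [show lap (Ψ t) x = ∑ i, pd (fun y => pd (Ψ t) i y) i x from rfl,
      Finset.sum_congr rfl (fun i _ => hterm i), ← Finset.sum_mul]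
    congr 1
    have hre : ∀ i : Fin d, pd (fun y => pd (A t) i y) i x
        + (Complex.I / (ε : ℂ)) * (pd (A t) i x * ((pd (S t) i x : ℝ) : ℂ)
            + A t x * ((pd (fun y => pd (S t) i y) i x : ℝ) : ℂ))
        + (Complex.I / (ε : ℂ))
          * (pd (A t) i x + (Complex.I / (ε : ℂ)) * A t x * ((pd (S t) i x : ℝ) : ℂ))
          * ((pd (S t) i x : ℝ) : ℂ)
        = pd (fun y => pd (A t) i y) i x
          + (2 * Complex.I / (ε : ℂ)) * (((pd (S t) i x : ℝ) : ℂ) * pd (A t) i x)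
          + (Complex.I / (ε : ℂ) * A t x) * ((pd (fun y => pd (S t) i y) i x : ℝ) : ℂ)
          + (Complex.I * Complex.I / ((ε : ℂ) * (ε : ℂ)) * A t x)
            * (((pd (S t) i x : ℝ) : ℂ) * ((pd (S t) i x : ℝ) : ℂ)) := by
      intro i; ring
    rw [Finset.sum_congr rfl (fun i _ => hre i), Finset.sum_add_distrib,
      Finset.sum_add_distrib, Finset.sum_add_distrib, ← Finset.mul_sum, ← Finset.mul_sum,
      ← Finset.mul_sum]
    have hfold : ∑ i, pd (fun y => pd (A t) i y) i x = lap (A t) x := rfl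
    have hτ : ∑ i, ((pd (fun y => pd (S t) i y) i x : ℝ) : ℂ) = ((lap (S t) x : ℝ) : ℂ) := by
      rw [lap]; push_cast; rfl
    have hσ : ∑ i, (((pd (S t) i x : ℝ) : ℂ) * ((pd (S t) i x : ℝ) : ℂ))
        = ((∑ i, (pd (S t) i x)^2 : ℝ) : ℂ) := by
      push_cast
      exact Finset.sum_congr rfl fun i _ => (sq _).symm
    rw [hfold, hτ, hσ, Complex.I_mul_I]
    ring
  -- norm of Ψ
  have hnorm : ‖Ψ t x‖ = ‖A t x‖ := by
    rw [hΨ t x, norm_mul]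
    have h0 : Complex.I * ((S t x : ℝ) : ℂ) / (ε : ℂ) = ((S t x / ε : ℝ) : ℂ) * Complex.I := by
      rw [Complex.ofReal_div]; ring
    have h3 : ‖Complex.exp (((S t x / ε : ℝ) : ℂ) * Complex.I)‖ = 1 := by
      rw [Complex.norm_exp_ofReal_mul_I]
    rw [h0, h3, mul_one]
  -- the PDEs at (t, x)
  have h1 := hPDE1 t ht x
  have h2 := hPDE2 t ht x
  -- coerce PDE1 to ℂ and solve for St'
  have h1c : ((St' : ℝ) : ℂ) = (ε : ℂ)^2 * ((lap (S t) x : ℝ) : ℂ)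
      - ((∑ i, (pd (S t) i x)^2 : ℝ) : ℂ) / 2 - ((‖A t x‖^2 : ℝ) : ℂ) := by
    have : St' = ε^2 * lap (S t) x - (∑ i, (pd (S t) i x)^2) / 2 - ‖A t x‖^2 := by
      rw [← h1]; ring
    rw [this]; push_cast; ring
  have h2c : At' = (Complex.I * (ε : ℂ) / 2) * lap (A t) x
      - Complex.I * (ε : ℂ) * A t x * ((lap (S t) x : ℝ) : ℂ)
      - (∑ i, ((pd (S t) i x : ℝ) : ℂ) * pd (A t) i x)
      - (A t x / 2) * ((lap (S t) x : ℝ) : ℂ) := by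
    rw [← h2]; ring
  -- finish
  rw [hderivΨ, hlap, hnorm, hΨ t x, ← he, h1c, h2c]
  have hI : Complex.I * Complex.I = -1 := Complex.I_mul_I
  field_simp
  ring_nf
  simp only [Complex.I_sq]
  ring
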